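/- arXiv:math/0507411 — 5 statements merged into one kernel-verified Lean document; each statement's English description precedes it below -/
import Mathlib

section
/- If Q is a doubly stochastic 4×4 real matrix and W is the 4×4 matrix with all entries 1/4, then the operator norm satisfies ‖Q − W‖ ≤ 1. -/
open Matrix

/-- The 4×4 matrix all of whose entries equal 1/4. -/
noncomputable def Wmat : Matrix (Fin 4) (Fin 4) ℝ := fun _ _ => 1/4

/-- `Q` is doubly stochastic. -/
def IsDoublyStochastic (Q : Matrix (Fin 4) (Fin 4) ℝ) : Prop :=
  (∀ i j, 0 ≤ Q i j) ∧ (∀ i, ∑ j, Q i j = 1) ∧ (∀ j, ∑ i, Q i j = 1)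

/-- The operator norm (induced by the Euclidean norm on ℝ⁴) of a 4×4 real matrix. -/
noncomputable def euclOpNorm (A : Matrix (Fin 4) (Fin 4) ℝ) : ℝ :=
  ‖(Matrix.toEuclideanLin A : EuclideanSpace ℝ (Fin 4) →ₗ[ℝ]
      EuclideanSpace ℝ (Fin 4)).toContinuousLinearMap‖

theorem opNorm_sub_W_le_one (Q : Matrix (Fin 4) (Fin 4) ℝ)
    (hQ : IsDoublyStochastic Q) : euclOpNorm (Q - Wmat) ≤ 1 := by
  obtain ⟨hpos, hrow, hcol⟩ := hQ
  refine ContinuousLinearMap.opNorm_le_bound _ zero_le_one (fun x => ?_)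
  rw [one_mul]
  simp only [LinearMap.coe_toContinuousLinearMap']
  set v : Fin 4 → ℝ := (WithLp.equiv 2 (Fin 4 → ℝ)) x with hv
  set m : ℝ := (∑ j, v j) / 4 with hm
  set z : Fin 4 → ℝ := fun j => v j - m with hz
  have hsum : ∑ j, v j = 4 * m := by rw [hm]; ring
  -- the matrix action
  have hact : (Q - Wmat) *ᵥ v = Q *ᵥ z := by
    funext i
    simp only [mulVec, dotProduct, Matrix.sub_apply, Wmat, hz, sub_mul, mul_sub,
      Finset.sum_sub_distrib, ← Finset.sum_mul, ← Finset.mul_sum, hrow i, hsum]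
    ring
  have key : ∑ i, (Q *ᵥ z) i ^ 2 ≤ ∑ j, v j ^ 2 := by
    have step1 : ∀ i, (Q *ᵥ z) i ^ 2 ≤ ∑ j, Q i j * z j ^ 2 := by
      intro i
      have cs := Finset.sum_mul_sq_le_sq_mul_sq Finset.univ
        (fun j => Real.sqrt (Q i j)) (fun j => Real.sqrt (Q i j) * z j)
      have e1 : ∀ j, Real.sqrt (Q i j) * (Real.sqrt (Q i j) * z j) = Q i j * z j := by
        intro j; rw [← mul_assoc, Real.mul_self_sqrt (hpos i j)]
      have e2 : ∀ j, Real.sqrt (Q i j) ^ 2 = Q i j := fun j => Real.sq_sqrt (hpos i j)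
      have e3 : ∀ j, (Real.sqrt (Q i j) * z j) ^ 2 = Q i j * z j ^ 2 := by
        intro j; rw [mul_pow, Real.sq_sqrt (hpos i j)]
      simp only [e1, e2, e3, hrow i, one_mul] at cs
      exact cs
    calc ∑ i, (Q *ᵥ z) i ^ 2 ≤ ∑ i, ∑ j, Q i j * z j ^ 2 :=
          Finset.sum_le_sum fun i _ => step1 i
      _ = ∑ j, (∑ i, Q i j) * z j ^ 2 := by
          rw [Finset.sum_comm]; simp [Finset.sum_mul]
      _ = ∑ j, z j ^ 2 := by simp [hcol]
      _ ≤ ∑ j, v j ^ 2 := by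
          have : ∑ j, z j ^ 2 = ∑ j, v j ^ 2 - 4 * m ^ 2 := by
            simp only [hz, sub_sq, Finset.sum_add_distrib, Finset.sum_sub_distrib,
              ← Finset.sum_mul, ← Finset.mul_sum, hsum, Finset.sum_const,
              Finset.card_univ, Fintype.card_fin, nsmul_eq_mul]
            ring
          nlinarith [sq_nonneg m]
  have hnx : ‖x‖ = Real.sqrt (∑ j, v j ^ 2) := by
    rw [EuclideanSpace.norm_eq]
    refine congrArg Real.sqrt (Finset.sum_congr rfl fun j _ => ?_)
    rw [Real.norm_eq_abs, sq_abs]; rfl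
  have hnlx : ‖(Matrix.toEuclideanLin (Q - Wmat)) x‖
      = Real.sqrt (∑ i, (Q *ᵥ z) i ^ 2) := by
    rw [EuclideanSpace.norm_eq]
    refine congrArg Real.sqrt (Finset.sum_congr rfl fun i _ => ?_)
    rw [Real.norm_eq_abs, sq_abs, Matrix.toEuclideanLin_apply]
    show ((Q - Wmat) *ᵥ v) i ^ 2 = _
    rw [hact]
  rw [hnlx, hnx]
  exact Real.sqrt_le_sqrt key
end

section
/- If Q is a doubly stochastic 4×4 real matrix such that all entries of QᵀQ are strictly positive, then ‖Q − W‖ < 1, where W is the 4×4 matrix with all entries 1/4 and ‖·‖ is the operator norm induced by the Euclidean norm. -/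
/-!
Write `S = QᵀQ` and `P = Q - W`. Because `Q` has unit column sums, `PᵀP = S - W`, so
`‖Px‖² = xᵀSx - (∑ xᵢ)²/4`. If every entry of `S` is at least `ε > 0`, then `S - εJ` (with `J` the
all-ones matrix) is nonnegative with all row and column sums `1 - 4ε`, and the inequality
`2xᵢxⱼ ≤ xᵢ² + xⱼ²` bounds its quadratic form by `(1 - 4ε)‖x‖²`. As `ε ≤ 1/4`, the remaining
`(ε - 1/4)(∑ xᵢ)²` is nonpositive, hence `‖P‖ ≤ √(1 - 4ε) < 1`.
-/

open Matrix

open Finset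

section

variable {m n : Type*} [Fintype m] [Fintype n]

theorem dotProduct_mulVec_le_of_nonneg_of_sum_eq {A : Matrix n n ℝ} {c : ℝ}
    (hA : ∀ i j, 0 ≤ A i j) (hrow : ∀ i, ∑ j, A i j = c) (hcol : ∀ j, ∑ i, A i j = c)
    (x : n → ℝ) : x ⬝ᵥ (A *ᵥ x) ≤ c * (x ⬝ᵥ x) := by
  calc x ⬝ᵥ (A *ᵥ x) = ∑ i, ∑ j, A i j * (x i * x j) := by
        simp only [dotProduct, mulVec, mul_sum]
        exact sum_congr rfl fun i _ => sum_congr rfl fun j _ => by ring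
    _ ≤ ∑ i, ∑ j, A i j * ((x i ^ 2 + x j ^ 2) / 2) := by
        gcongr with i _ j _
        · exact hA i j
        · linarith [two_mul_le_add_sq (x i) (x j)]
    _ = (∑ i, ∑ j, A i j * x i ^ 2 + ∑ i, ∑ j, A i j * x j ^ 2) / 2 := by
        simp only [← sum_add_distrib, sum_div]
        exact sum_congr rfl fun i _ => sum_congr rfl fun j _ => by ring
    _ = c * (x ⬝ᵥ x) := by
        rw [sum_comm (f := fun i j => A i j * x j ^ 2)]
        simp only [← sum_mul, hrow, hcol, dotProduct, mul_sum, sq]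
        ring

theorem dotProduct_of_const_mulVec (c : ℝ) (x : n → ℝ) :
    x ⬝ᵥ (of (fun _ _ => c) *ᵥ x) = c * (∑ i, x i) ^ 2 := by
  simp only [dotProduct, mulVec, of_apply, ← mul_sum, ← sum_mul]
  ring

theorem dotProduct_mulVec_sub_const_le [DecidableEq n] {S : Matrix n n ℝ}
    (hS : S ∈ doublyStochastic ℝ n) {ε c : ℝ} (hε : ∀ i j, ε ≤ S i j) (hεc : ε ≤ c)
    (x : n → ℝ) :
    x ⬝ᵥ ((S - of fun _ _ => c) *ᵥ x) ≤ (1 - Fintype.card n * ε) * (x ⬝ᵥ x) := by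
  have hshift := dotProduct_mulVec_le_of_nonneg_of_sum_eq (A := S - of fun _ _ => ε)
    (c := 1 - Fintype.card n * ε) (fun i j => sub_nonneg.2 (hε i j))
    (fun i => by simp [sum_sub_distrib, sum_row_of_mem_doublyStochastic hS])
    (fun j => by simp [sum_sub_distrib, sum_col_of_mem_doublyStochastic hS]) x
  have hsplit : S - of (fun _ _ => c) = (S - of fun _ _ => ε) - of fun _ _ => c - ε := by
    ext i j; simp
  rw [hsplit, sub_mulVec, dotProduct_sub, dotProduct_of_const_mulVec]
  nlinarith [mul_nonneg (sub_nonneg.2 hεc) (sq_nonneg (∑ i, x i))]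

theorem sub_const_transpose_mul_sub_const {Q : Matrix n n ℝ} {c : ℝ}
    (hc : Fintype.card n * c = 1) (hcol : ∀ j, ∑ i, Q i j = 1) :
    (Q - of fun _ _ => c)ᵀ * (Q - of fun _ _ => c) = Qᵀ * Q - of fun _ _ => c := by
  ext j k
  simp only [transpose_sub, mul_apply, Matrix.sub_apply, transpose_apply, of_apply, mul_sub,
    sub_mul, sum_sub_distrib, ← mul_sum, hcol, mul_one, ← sum_mul, one_mul, sum_const, card_univ,
    nsmul_eq_mul, sub_eq_self]
  linear_combination (-c) * hc

theorem norm_toEuclideanLin_le [DecidableEq n] {A : Matrix m n ℝ} {c : ℝ} (hc : 0 ≤ c)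
    (hA : ∀ x, x ⬝ᵥ ((Aᵀ * A) *ᵥ x) ≤ c ^ 2 * (x ⬝ᵥ x)) :
    ‖(toEuclideanLin A : EuclideanSpace ℝ n →ₗ[ℝ] EuclideanSpace ℝ m).toContinuousLinearMap‖
      ≤ c := by
  refine ContinuousLinearMap.opNorm_le_bound _ hc fun x => ?_
  rw [← pow_le_pow_iff_left₀ (norm_nonneg _) (by positivity) two_ne_zero, mul_pow,
    ← real_inner_self_eq_norm_sq, ← real_inner_self_eq_norm_sq]
  simp only [EuclideanSpace.inner_eq_star_dotProduct, star_trivial]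
  calc _ = x.ofLp ⬝ᵥ ((Aᵀ * A) *ᵥ x.ofLp) := by
        rw [← mulVec_mulVec, dotProduct_mulVec, vecMul_transpose]; rfl
    _ ≤ _ := hA x

end

theorem opNorm_sub_W_lt_one_of_pos_QTQ (Q : Matrix (Fin 4) (Fin 4) ℝ)
    (hQ : IsDoublyStochastic Q)
    (hpos : ∀ i j, 0 < (Q.transpose * Q) i j) :
    euclOpNorm (Q - Wmat) < 1 := by
  have hQ' : Q ∈ doublyStochastic ℝ (Fin 4) := mem_doublyStochastic_iff_sum.2 hQ
  have hS : Qᵀ * Q ∈ doublyStochastic ℝ (Fin 4) :=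
    mul_mem (transpose_mem_doublyStochastic_iff.2 hQ') hQ'
  obtain ⟨⟨i₀, j₀⟩, hmin⟩ := Finite.exists_min fun p : Fin 4 × Fin 4 => (Qᵀ * Q) p.1 p.2
  set ε := (Qᵀ * Q) i₀ j₀
  have hε : ∀ i j, ε ≤ (Qᵀ * Q) i j := fun i j => hmin (i, j)
  have hε4 : ε ≤ 1 / 4 := by
    have := sum_row_of_mem_doublyStochastic hS 0
    simp only [Fin.sum_univ_four] at this
    linarith [hε 0 0, hε 0 1, hε 0 2, hε 0 3]
  have hbound (x : Fin 4 → ℝ) :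
      x ⬝ᵥ (((Q - Wmat)ᵀ * (Q - Wmat)) *ᵥ x) ≤ √(1 - 4 * ε) ^ 2 * (x ⬝ᵥ x) := by
    rw [Real.sq_sqrt (by linarith), show Wmat = of fun _ _ => 1 / 4 from rfl,
      sub_const_transpose_mul_sub_const (by norm_num) (sum_col_of_mem_doublyStochastic hQ')]
    simpa using dotProduct_mulVec_sub_const_le hS hε hε4 x
  calc euclOpNorm (Q - Wmat) ≤ √(1 - 4 * ε) :=
        norm_toEuclideanLin_le (Real.sqrt_nonneg _) hbound
    _ < 1 := by rw [Real.sqrt_lt' one_pos]; linarith [hpos i₀ j₀]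
end

section
/- If Q is a 4×4 stochastic matrix with all diagonal entries strictly positive, and Q is irreducible and aperiodic (i.e., some power Qᵏ has all entries strictly positive), then some power of QᵀQ has all entries strictly positive. -/
open Matrix

/-- `Q` is stochastic: nonnegative entries, each row sums to 1. -/
def IsStochastic (Q : Matrix (Fin 4) (Fin 4) ℝ) : Prop :=
  (∀ i j, 0 ≤ Q i j) ∧ (∀ i, ∑ j, Q i j = 1)

lemma pow_entrywise_le {n : ℕ} (A B : Matrix (Fin n) (Fin n) ℝ)
    (hB : ∀ i j, 0 ≤ B i j) (h : ∀ i j, B i j ≤ A i j) (k : ℕ) :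
    ∀ i j, 0 ≤ (B ^ k) i j ∧ (B ^ k) i j ≤ (A ^ k) i j := by
  induction k with
  | zero =>
    intro i j
    simp only [pow_zero, Matrix.one_apply]
    constructor <;> [positivity; rfl]
  | succ k ih =>
    intro i j
    rw [pow_succ, pow_succ]
    simp only [Matrix.mul_apply]
    constructor
    · exact Finset.sum_nonneg fun l _ => mul_nonneg (ih i l).1 (hB l j)
    · refine Finset.sum_le_sum fun l _ => mul_le_mul (ih i l).2 (h l j) (hB l j) ?_
      exact le_trans (ih i l).1 (ih i l).2

theorem QTQ_pow_pos_of_pos_diagonal (Q : Matrix (Fin 4) (Fin 4) ℝ)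
    (hQ : IsStochastic Q)
    (hdiag : ∀ i, 0 < Q i i)
    (hprim : ∃ k : ℕ, 1 ≤ k ∧ ∀ i j, 0 < (Q ^ k) i j) :
    ∃ m : ℕ, 1 ≤ m ∧ ∀ i j, 0 < ((Q.transpose * Q) ^ m) i j := by
  obtain ⟨hnn, _⟩ := hQ
  obtain ⟨k, hk1, hkpos⟩ := hprim
  set c : ℝ := Finset.univ.inf' (by simp) (fun i => Q i i) with hc
  have hcpos : 0 < c := by
    rw [hc, Finset.lt_inf'_iff]
    exact fun i _ => hdiag i
  have hcle : ∀ i, c ≤ Q i i := fun i => Finset.inf'_le _ (Finset.mem_univ i)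
  have hBnn : ∀ i j, 0 ≤ (c • Q) i j := fun i j => by
    simp only [Matrix.smul_apply, smul_eq_mul]
    exact mul_nonneg hcpos.le (hnn i j)
  have hle : ∀ i j, (c • Q) i j ≤ (Q.transpose * Q) i j := by
    intro i j
    simp only [Matrix.smul_apply, smul_eq_mul, Matrix.mul_apply, Matrix.transpose_apply]
    calc c * Q i j ≤ Q i i * Q i j :=
          mul_le_mul_of_nonneg_right (hcle i) (hnn i j)
      _ ≤ ∑ l, Q l i * Q l j := by
          refine Finset.single_le_sum (fun l _ => mul_nonneg (hnn l i) (hnn l j))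
            (Finset.mem_univ i)
  refine ⟨k, hk1, fun i j => ?_⟩
  have key := (pow_entrywise_le (Q.transpose * Q) (c • Q) hBnn hle k i j).2
  have : ((c • Q) ^ k) i j = c ^ k * (Q ^ k) i j := by
    rw [smul_pow]; simp
  rw [this] at key
  exact lt_of_lt_of_le (mul_pos (pow_pos hcpos k) (hkpos i j)) key
end

section
/- Let Q be the 4×4 doubly stochastic matrix with rows (0,0,0,1), (0,1/2,1/2,0), (1,0,0,0), (0,1/2,1/2,0). Then ‖Q − W‖ = 1, where W is the 4×4 matrix with all entries 1/4 and ‖·‖ is the operator norm induced by the Euclidean norm on ℝ⁴. -/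
/-!
Since `Q` is row stochastic, `Q W = W`, so `Q - W = Q (1 - W)`. Being doubly stochastic, `Q` is a
contraction for the Euclidean norm (Birkhoff), and `1 - W` is the orthogonal projection onto the
vectors with zero mean, so `‖Q - W‖ ≤ 1`. Equality is attained at `(1, 0, 0, -1)`, which has zero
mean and is sent by `Q` to `(-1, 0, 1, 0)`.
-/

open Matrix

/-- The explicit doubly stochastic matrix from the paper. -/
noncomputable def Qex : Matrix (Fin 4) (Fin 4) ℝ :=
  !![0, 0, 0, 1;
     0, 1/2, 1/2, 0;
     1, 0, 0, 0;
     0, 1/2, 1/2, 0]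

open scoped Matrix.Norms.L2Operator

namespace Matrix

variable {n : Type*} [Fintype n] [DecidableEq n]

lemma l2_opNorm_le_one_of_sum_sq_mulVec_le {A : Matrix n n ℝ}
    (hA : ∀ x : n → ℝ, ∑ i, (A *ᵥ x) i ^ 2 ≤ ∑ i, x i ^ 2) : ‖A‖ ≤ 1 := by
  refine ContinuousLinearMap.opNorm_le_bound _ zero_le_one fun x => ?_
  rw [one_mul, ← sq_le_sq₀ (norm_nonneg _) (norm_nonneg _),
    EuclideanSpace.real_norm_sq_eq, EuclideanSpace.real_norm_sq_eq]
  exact hA x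

lemma one_le_l2_opNorm_of_norm_mulVec_eq {A : Matrix n n ℝ} {x : EuclideanSpace ℝ n} (hx : x ≠ 0)
    (hAx : ‖(EuclideanSpace.equiv n ℝ).symm (A *ᵥ x)‖ = ‖x‖) : 1 ≤ ‖A‖ := by
  have := A.l2_opNorm_mulVec x
  rw [hAx] at this
  exact one_le_of_le_mul_left₀ (norm_pos_iff.2 hx) (by simpa [mul_comm] using this)

variable (n) in
noncomputable def meanMatrix : Matrix n n ℝ := of fun _ _ => (Fintype.card n : ℝ)⁻¹

lemma mul_meanMatrix_of_mem_rowStochastic {Q : Matrix n n ℝ} (hQ : Q ∈ rowStochastic ℝ n) :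
    Q * meanMatrix n = meanMatrix n := by
  ext i j
  simp [meanMatrix, mul_apply, ← Finset.sum_mul, sum_row_of_mem_rowStochastic hQ]

lemma sum_sq_sub_meanMatrix_mulVec_le (x : n → ℝ) :
    ∑ i, ((1 - meanMatrix n) *ᵥ x) i ^ 2 ≤ ∑ i, x i ^ 2 := by
  set m := (Fintype.card n : ℝ)⁻¹ * ∑ i, x i
  have hmean : ∀ i, ((1 - meanMatrix n) *ᵥ x) i = x i - m := fun i => by
    rw [sub_mulVec, one_mulVec]
    simp [meanMatrix, mulVec, dotProduct, m, Finset.mul_sum]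
  rcases isEmpty_or_nonempty n with hn | hn
  · simp
  have hsum : ∑ i, x i = Fintype.card n * m := by
    rw [← mul_assoc, mul_inv_cancel₀ (Nat.cast_ne_zero.2 Fintype.card_ne_zero), one_mul]
  simp_rw [hmean]
  calc ∑ i, (x i - m) ^ 2 = ∑ i, x i ^ 2 - Fintype.card n * m ^ 2 := by
        simp only [sub_sq, Finset.sum_add_distrib, Finset.sum_sub_distrib, ← Finset.mul_sum,
          ← Finset.sum_mul, hsum, Finset.sum_const, Finset.card_univ, nsmul_eq_mul]
        ring
    _ ≤ ∑ i, x i ^ 2 := sub_le_self _ (by positivity)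

lemma l2_opNorm_one_sub_meanMatrix_le_one : ‖1 - meanMatrix n‖ ≤ 1 :=
  l2_opNorm_le_one_of_sum_sq_mulVec_le sum_sq_sub_meanMatrix_mulVec_le

lemma l2_opNorm_sub_meanMatrix_le_one_of_mem_doublyStochastic {Q : Matrix n n ℝ}
    (hQ : Q ∈ doublyStochastic ℝ n) : ‖Q - meanMatrix n‖ ≤ 1 := by
  have hfactor : Q - meanMatrix n = Q * (1 - meanMatrix n) := by
    rw [mul_sub, mul_one, mul_meanMatrix_of_mem_rowStochastic
      (mem_doublyStochastic_iff_mem_rowStochastic_and_mem_colStochastic.1 hQ).1]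
  calc ‖Q - meanMatrix n‖ ≤ ‖Q‖ * ‖1 - meanMatrix n‖ := hfactor ▸ l2_opNorm_mul _ _
    _ ≤ 1 * 1 := mul_le_mul (l2_opNorm_le_one_of_mem_doublyStochastic hQ)
        l2_opNorm_one_sub_meanMatrix_le_one (norm_nonneg _) zero_le_one
    _ = 1 := one_mul 1

end Matrix

open WithLp

lemma Qex_mem_doublyStochastic : Qex ∈ doublyStochastic ℝ (Fin 4) := by
  refine mem_doublyStochastic_iff_sum.2 ⟨fun i j => ?_, fun i => ?_, fun j => ?_⟩
  · fin_cases i <;> fin_cases j <;> norm_num [Qex]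
  all_goals first | fin_cases i | fin_cases j
  all_goals norm_num [Qex, Fin.sum_univ_four, cons_val_two, cons_val_three]

lemma Wmat_eq_meanMatrix : Wmat = meanMatrix (Fin 4) := by
  ext i j
  norm_num [Wmat, meanMatrix]

lemma Qex_sub_Wmat_mulVec : (Qex - Wmat) *ᵥ ![1, 0, 0, -1] = ![-1, 0, 1, 0] := by
  ext i
  fin_cases i <;>
    norm_num [Qex, Wmat, mulVec, dotProduct, Fin.sum_univ_four, cons_val_two, cons_val_three]

lemma one_le_l2_opNorm_Qex_sub_Wmat : 1 ≤ ‖Qex - Wmat‖ := by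
  have hnorm : ‖toLp 2 (![-1, 0, 1, 0] : Fin 4 → ℝ)‖ = ‖toLp 2 (![1, 0, 0, -1] : Fin 4 → ℝ)‖ := by
    simp [EuclideanSpace.norm_eq, Fin.sum_univ_four]
  refine one_le_l2_opNorm_of_norm_mulVec_eq (x := toLp 2 ![1, 0, 0, -1]) (by simp) ?_
  simpa [Qex_sub_Wmat_mulVec] using hnorm

theorem opNorm_Qex_sub_W_eq_one : euclOpNorm (Qex - Wmat) = 1 := by
  change ‖Qex - Wmat‖ = 1
  have hupper : ‖Qex - Wmat‖ ≤ 1 := Wmat_eq_meanMatrix ▸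
    l2_opNorm_sub_meanMatrix_le_one_of_mem_doublyStochastic Qex_mem_doublyStochastic
  exact le_antisymm hupper one_le_l2_opNorm_Qex_sub_Wmat
end

section
/- Let {X_n} be the Markov chain on ℤ² where from state x the chain moves to x + (ε(x²),0) or to x + (0,ε(x¹)) each with probability 1/2 (the standard random walk on the Manhattan lattice), started at X₀ = (0,0). Then Y_n := φ(X_{2n}) is the standard simple random walk on ℤ²: the increments Y_{n+1} − Y_n are i.i.d. uniform on {e₁,−e₁,e₂,−e₂}. -/
open MeasureTheory ProbabilityTheory

/-- `ε j = 1` if `j` is even, `-1` if `j` is odd. -/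
def epsZ (j : ℤ) : ℤ := if Even j then 1 else -1

/-- Block-collapsing map `φ(x¹,x²) = (⌊x¹/2⌋, ⌊x²/2⌋)` (floor division). -/
def phiZ (x : ℤ × ℤ) : ℤ × ℤ := (Int.fdiv x.1 2, Int.fdiv x.2 2)

/-- The Manhattan step selected by a Boolean coin: `true` moves horizontally,
`false` moves vertically. -/
def manhattanStepFun (x : ℤ × ℤ) (b : Bool) : ℤ × ℤ :=
  if b then (x.1 + epsZ x.2, x.2) else (x.1, x.2 + epsZ x.1)

/-!
Every Manhattan step changes `x¹ + x²` by `ε = ±1`, so at even times the walk sits at a site with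
`x¹ ≡ x² (mod 2)`: the lower-left or the upper-right corner of a `2 × 2` block. From either corner
the next two coins move `φ(X)` to one of the four neighbouring blocks, through a bijection
`Bool × Bool → {±e₁, ±e₂}` that depends only on the corner, i.e. on the past. Since the pair of
coins is uniform and independent of the past, the increments of `φ(X_{2n})` are a fresh uniform
pair relabelled by a predictable permutation, and such variables are again i.i.d. uniform.
-/

open scoped ENNReal

section Independence

variable {Ω α β : Type*} {mΩ : MeasurableSpace Ω} {μ : Measure Ω}
  [MeasurableSpace α] [MeasurableSingletonClass α] [Countable α]
  [MeasurableSpace β] [MeasurableSingletonClass β]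

theorem measure_inter_eq_mul_of_indep {m₁ m₂ : MeasurableSpace Ω} (hind : Indep m₁ m₂ μ)
    (hm₁ : m₁ ≤ mΩ) (hm₂ : m₂ ≤ mΩ) {E : Set Ω} (hE : MeasurableSet[m₁] E) {P : Ω → α}
    (hP : Measurable[m₁] P) {Y : Ω → β} (hY : Measurable[m₂] Y) (h : α → β)
    {q : ℝ≥0∞} (hq : ∀ b, μ (Y ⁻¹' {b}) = q) :
    μ (E ∩ {ω | Y ω = h (P ω)}) = μ E * q := by
  have hEP : ∀ a, MeasurableSet[m₁] (E ∩ P ⁻¹' {a}) :=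
    fun a => hE.inter (hP (measurableSet_singleton a))
  have hdisj : Pairwise (Function.onFun Disjoint fun a => E ∩ P ⁻¹' {a}) := fun a a' haa' =>
    ((Set.disjoint_singleton.2 haa').preimage P).mono Set.inter_subset_right
      Set.inter_subset_right
  calc μ (E ∩ {ω | Y ω = h (P ω)})
      = μ (⋃ a, (E ∩ P ⁻¹' {a}) ∩ Y ⁻¹' {h a}) := by
        congr 1; ext ω; simp [and_comm]
    _ = ∑' a, μ (E ∩ P ⁻¹' {a}) * q := by
        rw [measure_iUnion
          (fun a a' haa' => (hdisj haa').mono Set.inter_subset_left Set.inter_subset_left)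
          fun a => (hm₁ _ (hEP a)).inter (hm₂ _ (hY (measurableSet_singleton _)))]
        congr 1; ext a
        rw [(Indep_iff _ _ _).1 hind _ _ (hEP a) (hY (measurableSet_singleton _)), hq]
    _ = μ E * q := by
        rw [ENNReal.tsum_mul_right, ← measure_iUnion hdisj fun a => hm₁ _ (hEP a),
          ← Set.inter_iUnion, ← Set.preimage_iUnion, Set.iUnion_singleton_eq_range,
          Set.range_id', Set.preimage_univ, Set.inter_univ]

theorem iIndepFun_of_measure_biInter_preimage_singleton {ι : Type*} [IsProbabilityMeasure μ]
    [Countable β] [Nonempty β] {f : ι → Ω → β} (hf : ∀ i, Measurable (f i))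
    (h : ∀ (S : Finset ι) (x : ι → β),
      μ (⋂ i ∈ S, f i ⁻¹' {x i}) = ∏ i ∈ S, μ (f i ⁻¹' {x i})) :
    iIndepFun f μ := by
  classical
  refine iIndepFun_iff_finset.2 fun S =>
    (iIndepFun_iff_map_fun_eq_pi_map (ι := S) fun i => (hf i).aemeasurable).2 ?_
  refine Measure.ext_of_singleton fun y => ?_
  let x : ι → β := fun i => if hi : i ∈ S then y ⟨i, hi⟩ else Classical.arbitrary β
  have hx : ∀ i : S, x i = y i := fun i => dif_pos i.2
  have hfiber : (fun ω (i : S) => f i ω) ⁻¹' {y} = ⋂ i ∈ S, f i ⁻¹' {x i} := by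
    ext ω
    simp only [Set.mem_preimage, Set.mem_singleton_iff, funext_iff, Set.mem_iInter]
    exact ⟨fun H i hi => (H ⟨i, hi⟩).trans (hx ⟨i, hi⟩).symm, fun H i => (H i i.2).trans (hx i)⟩
  rw [Measure.map_apply (measurable_pi_lambda _ fun i : S => hf i) (measurableSet_singleton y),
    hfiber, ← Set.univ_pi_singleton, Measure.pi_pi, h, ← Finset.prod_coe_sort]
  refine Finset.prod_congr rfl fun i _ => ?_
  rw [Measure.map_apply (hf i) (measurableSet_singleton _), hx]

section PredictablePermutation

variable [Countable β] {F : ℕ → MeasurableSpace Ω} {Y : ℕ → Ω → β} {P : ℕ → Ω → α}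
  {q : ℝ≥0∞}

theorem measurable_perm_apply_of_adapted (hF : Monotone F)
    (hY : ∀ k, Measurable[F (k + 1)] (Y k)) (hP : ∀ k, Measurable[F k] (P k))
    (e : α → Equiv.Perm β) (k : ℕ) :
    Measurable[F (k + 1)] fun ω => e (P k ω) (Y k ω) :=
  (Measurable.of_discrete (f := fun p : α × β => e p.1 p.2)).comp
    (((hP k).mono (hF k.le_succ) le_rfl).prodMk (hY k))

variable [IsProbabilityMeasure μ] (hF : Monotone F) (hFle : ∀ k, F k ≤ mΩ)
  (hY : ∀ k, Measurable[F (k + 1)] (Y k))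
  (hYindep : ∀ k, Indep (F k) (MeasurableSpace.comap (Y k) inferInstance) μ)
  (hYunif : ∀ k b, μ (Y k ⁻¹' {b}) = q) (hP : ∀ k, Measurable[F k] (P k))
  (e : α → Equiv.Perm β)
include hF hFle hY hYindep hYunif hP

theorem measure_biInter_perm_apply_preimage_singleton (S : Finset ℕ) (d : ℕ → β) :
    μ (⋂ k ∈ S, (fun ω => e (P k ω) (Y k ω)) ⁻¹' {d k}) = q ^ S.card := by
  induction S using Finset.induction_on_max with
  | empty => simp
  | insert a S hlt ih =>
    have hE : MeasurableSet[F a] (⋂ k ∈ S, (fun ω => e (P k ω) (Y k ω)) ⁻¹' {d k}) :=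
      Finset.measurableSet_biInter S fun k hk =>
        (measurable_perm_apply_of_adapted hF hY hP e k).mono (hF (hlt k hk)) le_rfl
          (measurableSet_singleton _)
    have hfiber : (fun ω => e (P a ω) (Y a ω)) ⁻¹' {d a}
        = {ω | Y a ω = (e (P a ω)).symm (d a)} := by
      ext ω
      exact (Equiv.eq_symm_apply _).symm
    rw [Finset.set_biInter_insert, Set.inter_comm, hfiber,
      measure_inter_eq_mul_of_indep (hYindep a) (hFle a) ((hY a).mono (hFle _) le_rfl).comap_le
        hE (hP a) (comap_measurable (Y a)) (fun p => (e p).symm (d a)) (hYunif a), ih,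
      Finset.card_insert_of_notMem fun ha => lt_irrefl a (hlt a ha), pow_succ]

theorem iIndepFun_perm_apply_of_indep_past [Nonempty β] :
    iIndepFun (fun k ω => e (P k ω) (Y k ω)) μ ∧
      ∀ k b, μ ((fun ω => e (P k ω) (Y k ω)) ⁻¹' {b}) = q := by
  have hmarg : ∀ k b, μ ((fun ω => e (P k ω) (Y k ω)) ⁻¹' {b}) = q := fun k b => by
    simpa using measure_biInter_perm_apply_preimage_singleton hF hFle hY hYindep hYunif hP e {k}
      fun _ => b
  refine ⟨iIndepFun_of_measure_biInter_preimage_singleton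
    (fun k => (measurable_perm_apply_of_adapted hF hY hP e k).mono (hFle _) le_rfl)
    fun S d => ?_, hmarg⟩
  rw [measure_biInter_perm_apply_preimage_singleton hF hFle hY hYindep hYunif hP e,
    Finset.prod_congr rfl fun k _ => hmarg k (d k), Finset.prod_const]

end PredictablePermutation

end Independence

section Coins

variable {Ω : Type*} {mΩ : MeasurableSpace Ω} {μ : Measure Ω} {C : ℕ → Ω → Bool}

theorem measurable_biSup_comap {ι β : Type*} [MeasurableSpace β] (f : ι → Ω → β) {s : Set ι}
    {i : ι} (hi : i ∈ s) : Measurable[⨆ k ∈ s, MeasurableSpace.comap (f k) inferInstance] (f i) :=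
  (comap_measurable (f i)).mono
    (le_iSup₂ (f := fun k (_ : k ∈ s) => MeasurableSpace.comap (f k) inferInstance) i hi) le_rfl

abbrev coinsBefore (C : ℕ → Ω → Bool) (n : ℕ) : MeasurableSpace Ω :=
  ⨆ i ∈ Set.Iio n, MeasurableSpace.comap (C i) inferInstance

theorem coinsBefore_mono : Monotone (coinsBefore C) :=
  fun _ _ hmn => biSup_mono fun _ hi => lt_of_lt_of_le hi hmn

theorem coinsBefore_le (hC : ∀ i, Measurable (C i)) (n : ℕ) : coinsBefore C n ≤ mΩ :=
  iSup₂_le fun i _ => (hC i).comap_le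

theorem measurable_coinsBefore {i n : ℕ} (h : i < n) : Measurable[coinsBefore C n] (C i) :=
  measurable_biSup_comap C h

theorem measurable_coinsBefore_of_recursion {γ : Type*} [MeasurableSpace γ] [Countable γ]
    [MeasurableSingletonClass γ] {X : ℕ → Ω → γ} (step : γ → Bool → γ) (x₀ : γ)
    (hX0 : ∀ ω, X 0 ω = x₀) (hXrec : ∀ n ω, X (n + 1) ω = step (X n ω) (C n ω)) (n : ℕ) :
    Measurable[coinsBefore C n] (X n) := by
  induction n with
  | zero => rw [funext hX0]; exact measurable_const
  | succ n ih =>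
    rw [funext (hXrec n)]
    exact (Measurable.of_discrete (f := fun p : γ × Bool => step p.1 p.2)).comp
      ((ih.mono (coinsBefore_mono n.le_succ) le_rfl).prodMk
        (measurable_coinsBefore n.lt_succ_self))

theorem indep_coinsBefore_coinPair (hC : ∀ i, Measurable (C i)) (hCindep : iIndepFun C μ)
    {n i j : ℕ} (hi : n ≤ i) (hj : n ≤ j) :
    Indep (coinsBefore C n)
      (MeasurableSpace.comap (fun ω => (C i ω, C j ω)) inferInstance) μ := by
  have hdisj : Disjoint (Set.Iio n) {i, j} := by
    simp only [Set.disjoint_left, Set.mem_Iio, Set.mem_insert_iff, Set.mem_singleton_iff]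
    omega
  refine indep_of_indep_of_le_right
    (indep_iSup_of_disjoint (fun k => (hC k).comap_le) hCindep hdisj) (Measurable.comap_le ?_)
  exact (measurable_biSup_comap C (by simp)).prodMk (measurable_biSup_comap C (by simp))

theorem measure_coin_preimage [IsProbabilityMeasure μ] (hC : ∀ i, Measurable (C i))
    (hfair : ∀ n, μ {ω | C n ω = true} = 2⁻¹) (n : ℕ) (b : Bool) :
    μ (C n ⁻¹' {b}) = 2⁻¹ := by
  cases b
  · rw [show C n ⁻¹' {false} = {ω | C n ω = true}ᶜ by ext; simp,
      prob_compl_eq_one_sub (s := {ω | C n ω = true}) (hC n (measurableSet_singleton true)),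
      hfair, ENNReal.one_sub_inv_two]
  · exact hfair n

theorem measure_coinPair_preimage [IsProbabilityMeasure μ] (hC : ∀ i, Measurable (C i))
    (hCindep : iIndepFun C μ) (hfair : ∀ n, μ {ω | C n ω = true} = 2⁻¹) {i j : ℕ} (hij : i ≠ j)
    (b : Bool × Bool) : μ ((fun ω => (C i ω, C j ω)) ⁻¹' {b}) = 4⁻¹ := by
  rw [← Set.singleton_prod_singleton, Set.mk_preimage_prod,
    (hCindep.indepFun hij).measure_inter_preimage_eq_mul _ _ (measurableSet_singleton _)
      (measurableSet_singleton _),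
    measure_coin_preimage hC hfair, measure_coin_preimage hC hfair,
    ← ENNReal.mul_inv (by norm_num) (by norm_num)]
  norm_num

end Coins

section ManhattanWalk

theorem epsZ_two_mul (a : ℤ) : epsZ (2 * a) = 1 := if_pos (even_two_mul a)

theorem epsZ_two_mul_add_one (a : ℤ) : epsZ (2 * a + 1) = -1 := if_neg (by simp [parity_simps])

theorem odd_epsZ (j : ℤ) : Odd (epsZ j) := by
  unfold epsZ; split_ifs <;> decide

theorem even_add_manhattanStepFun_iff (x : ℤ × ℤ) (b : Bool) :
    Even ((manhattanStepFun x b).1 + (manhattanStepFun x b).2) ↔ ¬Even (x.1 + x.2) := by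
  have key : ∀ y, Even (x.1 + x.2 + epsZ y) ↔ ¬Even (x.1 + x.2) := fun y => by
    simp [Int.even_add, Int.not_even_iff_odd.2 (odd_epsZ y)]
  cases b
  · simpa only [manhattanStepFun, Bool.false_eq_true, if_false, ← add_assoc] using key x.1
  · simpa only [manhattanStepFun, if_true, add_right_comm] using key x.2

-- The displacement of `φ` over two steps from a site `(2a, 2b)` with coins `(b₁, b₂)`.
def blockMove : Bool × Bool → ℤ × ℤ
  | (true, true) => (1, 0)
  | (false, true) => (-1, 0)
  | (false, false) => (0, 1)
  | (true, false) => (0, -1)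

theorem range_blockMove : Set.range blockMove = {(1, 0), (-1, 0), (0, 1), (0, -1)} := by
  ext v
  simp only [Set.mem_range, Prod.exists, Bool.exists_bool, blockMove, Set.mem_insert_iff,
    Set.mem_singleton_iff]
  tauto

theorem blockMove_injective : Function.Injective blockMove := by decide

-- From a site `(2a + 1, 2b + 1)` the table `blockMove` applies with the first coin flipped.
def blockCoins (x : ℤ × ℤ) : Equiv.Perm (Bool × Bool) :=
  Function.Involutive.toPerm (fun c => (xor c.1 (decide (Odd x.1)), c.2)) fun c => by simp

theorem phiZ_manhattanStepFun_two_sub (x : ℤ × ℤ) (hx : Even (x.1 + x.2)) (b₁ b₂ : Bool) :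
    phiZ (manhattanStepFun (manhattanStepFun x b₁) b₂) - phiZ x
      = blockMove (blockCoins x (b₁, b₂)) := by
  obtain ⟨a, b, rfl | rfl⟩ : ∃ a b : ℤ, x = (2 * a, 2 * b) ∨ x = (2 * a + 1, 2 * b + 1) := by
    rw [Int.even_iff] at hx
    exact ⟨x.1 / 2, x.2 / 2, by simp only [Prod.ext_iff]; omega⟩
  all_goals cases b₁ <;> cases b₂ <;>
    simp [blockCoins, manhattanStepFun, epsZ_two_mul, epsZ_two_mul_add_one, phiZ, blockMove,
      Int.fdiv_eq_ediv_of_nonneg, ← Int.not_even_iff_odd] <;> omega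

variable {Ω : Type*} {C : ℕ → Ω → Bool} {X : ℕ → Ω → ℤ × ℤ}

theorem even_manhattanWalk_iff (hX0 : ∀ ω, X 0 ω = (0, 0))
    (hXrec : ∀ n ω, X (n + 1) ω = manhattanStepFun (X n ω) (C n ω)) (n : ℕ) (ω : Ω) :
    Even ((X n ω).1 + (X n ω).2) ↔ Even n := by
  induction n with
  | zero => simp [hX0]
  | succ n ih => rw [hXrec, even_add_manhattanStepFun_iff, ih, Nat.even_add_one]

theorem phiZ_manhattanWalk_two_sub (hX0 : ∀ ω, X 0 ω = (0, 0))
    (hXrec : ∀ n ω, X (n + 1) ω = manhattanStepFun (X n ω) (C n ω)) (n : ℕ) (ω : Ω) :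
    phiZ (X (2 * (n + 1)) ω) - phiZ (X (2 * n) ω)
      = blockMove (blockCoins (X (2 * n) ω) (C (2 * n) ω, C (2 * n + 1) ω)) := by
  rw [show 2 * (n + 1) = 2 * n + 1 + 1 by ring, hXrec, hXrec]
  exact phiZ_manhattanStepFun_two_sub _
    ((even_manhattanWalk_iff hX0 hXrec _ ω).2 (even_two_mul n)) _ _

end ManhattanWalk

/-- The projection `Yₙ = φ(X_{2n})` of the standard Manhattan walk started at the
origin is the standard simple random walk on `ℤ²`: its increments are i.i.d.
uniform on `{±e₁, ±e₂}`. -/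
theorem manhattan_projects_to_simple_random_walk
    {Ω : Type*} [MeasurableSpace Ω] (μ : Measure Ω) [IsProbabilityMeasure μ]
    (C : ℕ → Ω → Bool) (hCmeas : ∀ n, Measurable (C n))
    (hCindep : iIndepFun C μ)
    (hCfair : ∀ n, μ {ω | C n ω = true} = 2⁻¹)
    (X : ℕ → Ω → ℤ × ℤ)
    (hX0 : ∀ ω, X 0 ω = (0, 0))
    (hXrec : ∀ n ω, X (n + 1) ω = manhattanStepFun (X n ω) (C n ω)) :
    iIndepFun
      (fun n ω => phiZ (X (2 * (n + 1)) ω) - phiZ (X (2 * n) ω)) μ ∧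
    ∀ n : ℕ, ∀ v ∈ ({(1, 0), (-1, 0), (0, 1), (0, -1)} : Set (ℤ × ℤ)),
      μ {ω | phiZ (X (2 * (n + 1)) ω) - phiZ (X (2 * n) ω) = v} = 4⁻¹ := by
  obtain ⟨hindep, hunif⟩ := iIndepFun_perm_apply_of_indep_past (μ := μ)
    (F := fun k => coinsBefore C (2 * k)) (Y := fun k ω => (C (2 * k) ω, C (2 * k + 1) ω))
    (P := fun k => X (2 * k)) (fun _ _ h => coinsBefore_mono (by omega))
    (fun k => coinsBefore_le hCmeas _)
    (fun k => (measurable_coinsBefore (by omega)).prodMk (measurable_coinsBefore (by omega)))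
    (fun k => indep_coinsBefore_coinPair hCmeas hCindep le_rfl (by omega))
    (fun k => measure_coinPair_preimage hCmeas hCindep hCfair (by omega))
    (fun k => measurable_coinsBefore_of_recursion manhattanStepFun (0, 0) hX0 hXrec _) blockCoins
  have hinc : (fun n ω => phiZ (X (2 * (n + 1)) ω) - phiZ (X (2 * n) ω))
      = fun n => blockMove ∘
          fun ω => blockCoins (X (2 * n) ω) (C (2 * n) ω, C (2 * n + 1) ω) := by
    funext n ω
    exact phiZ_manhattanWalk_two_sub hX0 hXrec n ω
  refine ⟨hinc ▸ hindep.comp (fun _ => blockMove) fun _ => .of_discrete, fun n v hv => ?_⟩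
  rw [← range_blockMove] at hv
  obtain ⟨d, rfl⟩ := hv
  simp_rw [phiZ_manhattanWalk_two_sub hX0 hXrec n, blockMove_injective.eq_iff]
  exact hunif n d
end
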